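/- arXiv:2002.10691 — 5 statements merged into one kernel-verified Lean document; each statement's English description precedes it below -/
import Mathlib

section
/- Let p be a prime, q = p^ν (ν ≥ 1) a power of p, and k a field of characteristic p. Let F = Σ_{i,j,k=0}^{2} a_{ijk} x_i x_j^q x_k^{q^2} ∈ k[x_0,x_1,x_2]. Let P = (p_0,p_1,p_2) ∈ k^3 with F(P) = 0, and let v = (v_0,v_1,v_2) ∈ k^3 satisfy Σ_{i,j,k} a_{ijk} v_i p_j^q p_k^{q^2} = 0 (i.e. the gradient of F at P pairs to zero with v). Then the univariate polynomial t ↦ F(p_0 + t v_0, p_1 + t v_1, p_2 + t v_2) ∈ k[t] is divisible by t^q. (Hence every tangent line of a curve C defined by a polynomial of the form (1) meets C with intersection multiplicity at least q at the point of tangency.) -/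
open MvPolynomial

/-- Let `F = Σ aᵢⱼₖ xᵢ xⱼ^q xₖ^(q²)` over a field of characteristic `p` (`q` a power
of `p`). If `P` is a point of the curve `F = 0` and `v` is a direction annihilated by the
gradient of `F` at `P`, then the univariate polynomial `t ↦ F(P + t v)` is divisible by
`t^q`: every tangent line meets the curve with multiplicity at least `q` at the point of
tangency. -/
theorem tangent_line_meets_with_multiplicity_q
    {k : Type*} [Field k] (p ν q : ℕ) (hp : p.Prime) [CharP k p]
    (hν : 1 ≤ ν) (hq : q = p ^ ν)
    (a : Fin 3 → Fin 3 → Fin 3 → k) (P v : Fin 3 → k)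
    (hP : eval P (∑ i : Fin 3, ∑ j : Fin 3, ∑ m : Fin 3,
        (C (a i j m) * X i * X j ^ q * X m ^ (q ^ 2) : MvPolynomial (Fin 3) k)) = 0)
    (hv : ∑ i : Fin 3, ∑ j : Fin 3, ∑ m : Fin 3,
        a i j m * v i * P j ^ q * P m ^ (q ^ 2) = 0) :
    (Polynomial.X : Polynomial k) ^ q ∣
      aeval (fun i : Fin 3 => Polynomial.C (P i) + Polynomial.X * Polynomial.C (v i))
        (∑ i : Fin 3, ∑ j : Fin 3, ∑ m : Fin 3,
          (C (a i j m) * X i * X j ^ q * X m ^ (q ^ 2) : MvPolynomial (Fin 3) k)) := by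
  have hq1 : 1 ≤ q := by rw [hq]; exact Nat.one_le_pow _ _ hp.pos
  have hqq : q ≤ q ^ 2 := by calc q = q ^ 1 := (pow_one q).symm
                                _ ≤ q ^ 2 := Nat.pow_le_pow_right hq1 (by norm_num)
  have hP' : ∑ i : Fin 3, ∑ j : Fin 3, ∑ m : Fin 3,
      a i j m * P i * P j ^ q * P m ^ (q ^ 2) = 0 := by
    simpa using hP
  set L : Fin 3 → Polynomial k :=
    fun i => Polynomial.C (P i) + Polynomial.X * Polynomial.C (v i) with hL
  have hLpow : ∀ (j : Fin 3) (n : ℕ),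
      (L j) ^ (p ^ n) = Polynomial.C (P j ^ (p ^ n))
        + Polynomial.X ^ (p ^ n) * Polynomial.C (v j ^ (p ^ n)) := by
    intro j n
    haveI := Fact.mk hp
    haveI : ExpChar (Polynomial k) p := ExpChar.prime hp
    rw [hL]
    simp only
    rw [add_pow_char_pow, mul_pow, Polynomial.C_pow, Polynomial.C_pow]
  have hLq : ∀ j : Fin 3, (L j) ^ q
      = Polynomial.C (P j ^ q) + Polynomial.X ^ q * Polynomial.C (v j ^ q) := by
    intro j; rw [hq]; exact hLpow j ν
  have hLq2 : ∀ j : Fin 3, (L j) ^ (q ^ 2)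
      = Polynomial.C (P j ^ (q ^ 2)) + Polynomial.X ^ (q ^ 2) * Polynomial.C (v j ^ (q ^ 2)) := by
    intro j
    have : q ^ 2 = p ^ (ν * 2) := by rw [hq, ← pow_mul]
    rw [this]; exact hLpow j (ν * 2)
  set base : Fin 3 → Fin 3 → Fin 3 → Polynomial k := fun i j m =>
    Polynomial.C (a i j m) * L i * Polynomial.C (P j ^ q) * Polynomial.C (P m ^ (q ^ 2))
    with hbase
  have haev : aeval L (∑ i : Fin 3, ∑ j : Fin 3, ∑ m : Fin 3,
      (C (a i j m) * X i * X j ^ q * X m ^ (q ^ 2) : MvPolynomial (Fin 3) k))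
      = ∑ i : Fin 3, ∑ j : Fin 3, ∑ m : Fin 3,
        Polynomial.C (a i j m) * L i * (L j) ^ q * (L m) ^ (q ^ 2) := by
    simp [map_sum, Polynomial.algebraMap_eq]
  rw [haev]
  have hdvd : ∀ i j m : Fin 3, (Polynomial.X : Polynomial k) ^ q ∣
      (Polynomial.C (a i j m) * L i * (L j) ^ q * (L m) ^ (q ^ 2) - base i j m) := by
    intro i j m
    have h1 : (Polynomial.X : Polynomial k) ^ q ∣
        Polynomial.X ^ q * Polynomial.C (v j ^ q) := dvd_mul_right _ _
    have h2 : (Polynomial.X : Polynomial k) ^ q ∣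
        Polynomial.X ^ (q ^ 2) * Polynomial.C (v m ^ (q ^ 2)) :=
      (pow_dvd_pow _ hqq).mul_right _
    have heq : Polynomial.C (a i j m) * L i * (L j) ^ q * (L m) ^ (q ^ 2) - base i j m
        = Polynomial.C (a i j m) * L i *
          (Polynomial.C (P j ^ q) * (Polynomial.X ^ (q ^ 2) * Polynomial.C (v m ^ (q ^ 2)))
           + (Polynomial.X ^ q * Polynomial.C (v j ^ q)) * Polynomial.C (P m ^ (q ^ 2))
           + (Polynomial.X ^ q * Polynomial.C (v j ^ q))
               * (Polynomial.X ^ (q ^ 2) * Polynomial.C (v m ^ (q ^ 2)))) := by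
      rw [hLq j, hLq2 m, hbase]
      ring
    rw [heq]
    exact Dvd.dvd.mul_left (dvd_add (dvd_add (h2.mul_left _) (h1.mul_right _)) (h1.mul_right _)) _
  have hsum : (∑ i : Fin 3, ∑ j : Fin 3, ∑ m : Fin 3, base i j m) = 0 := by
    have hb : ∀ i j m : Fin 3, base i j m
        = Polynomial.C (a i j m * P i * P j ^ q * P m ^ (q ^ 2))
          + Polynomial.X * Polynomial.C (a i j m * v i * P j ^ q * P m ^ (q ^ 2)) := by
      intro i j m
      rw [hbase, hL]
      simp only [map_mul]
      ring
    simp only [hb, Finset.sum_add_distrib, ← map_sum, ← Finset.mul_sum]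
    rw [hP', hv]
    simp
  have hmain : (Polynomial.X : Polynomial k) ^ q ∣
      ∑ i : Fin 3, ∑ j : Fin 3, ∑ m : Fin 3,
        (Polynomial.C (a i j m) * L i * (L j) ^ q * (L m) ^ (q ^ 2) - base i j m) :=
    Finset.dvd_sum fun i _ => Finset.dvd_sum fun j _ => Finset.dvd_sum fun m _ => hdvd i j m
  have hrw : ∑ i : Fin 3, ∑ j : Fin 3, ∑ m : Fin 3,
      (Polynomial.C (a i j m) * L i * (L j) ^ q * (L m) ^ (q ^ 2) - base i j m)
      = (∑ i : Fin 3, ∑ j : Fin 3, ∑ m : Fin 3,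
          Polynomial.C (a i j m) * L i * (L j) ^ q * (L m) ^ (q ^ 2))
        - ∑ i : Fin 3, ∑ j : Fin 3, ∑ m : Fin 3, base i j m := by
    simp [Finset.sum_sub_distrib]
  rw [hrw, hsum, sub_zero] at hmain
  exact hmain
end

section
/- Let p be a prime, q = p^ν (ν ≥ 1) a power of p, and k a field of characteristic p. Let F = Σ_{i,j,k=0}^{2} a_{ijk} x_i x_j^q x_k^{q^2} ∈ k[x_0,x_1,x_2] with a_{222} = 0, a_{122} = 0 and a_{022} = 1, and set f(x,y) = F(x, y, 1) ∈ k[x,y] (so f = x + a_{202}x^q + a_{212}y^q + a_{002}x^{q+1} + a_{102}x^q y + a_{012}x y^q + a_{112}y^{q+1} + (terms of degree ≥ q^2)). Then there exists a unique formal power series φ(t) ∈ k[[t]] with φ(0) = 0 such that f(φ(t), t) = 0 in k[[t]]; moreover the coefficient of t^j in φ is 0 for 1 ≤ j ≤ q−1, the coefficient of t^q is −a_{212}, and the coefficient of t^{q+1} is −a_{112}. -/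
/-!
Write `F(x, t, 1) = x - G(x)`. Apart from the linear term `x`, every monomial of `F(x, t, 1)` is
`x^e t^d` with `e = 0` or `q e + d ≥ 2q` (this is where `q ≥ 2` enters). Hence `G` is a
contraction for the `t`-adic metric on `t k[[t]]` and has a unique fixed point `φ` there, the
`t`-adic limit of `Gⁿ(0)`. Since `G(0) = -F(0, t, 1) ≡ -a₂₁₂ t^q - a₁₁₂ t^(q+1)` modulo `t^(q²)`,
the fixed point is divisible by `t^q`; on `t^q k[[t]]` the nonconstant monomials of `G` have order
at least `2q ≥ q + 2`, so `φ ≡ G(0)` modulo `t^(q+2)`.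
-/

theorem pow_dvd_pow_succ_sub_pow_succ {α : Type*} [CommRing α] {a x y : α} {r n : ℕ}
    (hx : a ^ r ∣ x) (hy : a ^ r ∣ y) (hxy : a ^ n ∣ x - y) (e : ℕ) :
    a ^ (n + r * e) ∣ x ^ (e + 1) - y ^ (e + 1) := by
  rw [← geom_sum₂_mul, add_comm, pow_add]
  refine mul_dvd_mul (Finset.dvd_sum fun i hi => ?_) hxy
  have hi : i ≤ e := Nat.lt_succ_iff.mp (Finset.mem_range.mp hi)
  calc a ^ (r * e) = (a ^ r) ^ i * (a ^ r) ^ (e + 1 - 1 - i) := by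
        rw [← pow_add, ← pow_mul, Nat.add_sub_cancel, Nat.add_sub_cancel' hi]
    _ ∣ x ^ i * y ^ (e + 1 - 1 - i) :=
        mul_dvd_mul (pow_dvd_pow_of_dvd hx _) (pow_dvd_pow_of_dvd hy _)

namespace PowerSeries

open Finset Function

variable {R : Type*} [CommRing R] {ι : Type*}

theorem eq_zero_of_forall_X_pow_dvd {φ : R⟦X⟧} (h : ∀ n, X ^ n ∣ φ) : φ = 0 := by
  ext n
  simpa using X_pow_dvd_iff.mp (h (n + 1)) n n.lt_succ_self

noncomputable def sumMonomials (s : Finset ι) (c : ι → R) (e d : ι → ℕ) (x : R⟦X⟧) :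
    R⟦X⟧ :=
  ∑ i ∈ s, C (c i) * x ^ e i * X ^ d i

/-- `xᵉ - yᵉ` is divisible by `X ^ (n + r * (e - 1))`, whence the condition on `m`. -/
theorem X_pow_dvd_sumMonomials_sub {s : Finset ι} {c : ι → R} {e d : ι → ℕ}
    {x y : R⟦X⟧} {r n m : ℕ} (hx : X ^ r ∣ x) (hy : X ^ r ∣ y) (hxy : X ^ n ∣ x - y)
    (h : ∀ i ∈ s, e i ≠ 0 → m + r ≤ n + r * e i + d i) :
    X ^ m ∣ sumMonomials s c e d x - sumMonomials s c e d y := by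
  rw [sumMonomials, sumMonomials, ← sum_sub_distrib]
  refine dvd_sum fun i hi => ?_
  rw [mul_assoc, mul_assoc, ← mul_sub, ← sub_mul]
  by_cases he : e i = 0
  · simp [he]
  have hm := h i hi he
  obtain ⟨e', he'⟩ := Nat.exists_eq_succ_of_ne_zero he
  rw [he', Nat.mul_succ] at hm
  rw [he']
  refine Dvd.dvd.mul_left ((pow_dvd_pow X (show m ≤ n + r * e' + d i by omega)).trans ?_) _
  rw [pow_add]
  exact mul_dvd_mul (pow_dvd_pow_succ_sub_pow_succ hx hy hxy _) dvd_rfl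

def IsXAdicContraction (G : R⟦X⟧ → R⟦X⟧) : Prop :=
  ∀ ⦃x y : R⟦X⟧⦄ (n : ℕ), X ∣ x → X ∣ y → X ^ n ∣ x - y → X ^ (n + 1) ∣ G x - G y

theorem isXAdicContraction_sumMonomials {s : Finset ι} {c : ι → R} {e d : ι → ℕ}
    (h : ∀ i ∈ s, e i = 0 ∨ 2 ≤ e i + d i) : IsXAdicContraction (sumMonomials s c e d) :=
  fun x y n hx hy hxy => X_pow_dvd_sumMonomials_sub (r := 1) (by simpa using hx)
    (by simpa using hy) hxy fun i hi he => by have := h i hi; omega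

/-- By contraction, the iterates `G^[N] 0` with `N > n` agree in degrees `≤ n`. -/
noncomputable def iterateLimit (G : R⟦X⟧ → R⟦X⟧) : R⟦X⟧ :=
  mk fun n => coeff n (G^[n + 1] 0)

namespace IsXAdicContraction

variable {G : R⟦X⟧ → R⟦X⟧} (hG : IsXAdicContraction G)
include hG

theorem X_dvd_apply (h0 : X ∣ G 0) {x : R⟦X⟧} (hx : X ∣ x) : X ∣ G x := by
  have h : X ∣ G x - G 0 := by simpa using hG 0 hx (dvd_zero X) (by simp)
  simpa using dvd_add h h0

theorem X_dvd_iterate (h0 : X ∣ G 0) (n : ℕ) : X ∣ G^[n] 0 := by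
  induction n with
  | zero => simp
  | succ n ih => rw [iterate_succ_apply']; exact hG.X_dvd_apply h0 ih

theorem X_pow_dvd_iterate_sub (h0 : X ∣ G 0) : ∀ {m N : ℕ}, m ≤ N → X ^ m ∣ G^[N] 0 - G^[m] 0
  | 0, _, _ => by simp
  | _ + 1, 0, h => absurd h (Nat.not_succ_le_zero _)
  | m + 1, N + 1, h => by
    simpa only [iterate_succ_apply'] using hG m (hG.X_dvd_iterate h0 N) (hG.X_dvd_iterate h0 m)
      (X_pow_dvd_iterate_sub h0 (Nat.le_of_succ_le_succ h))

theorem X_pow_dvd_iterateLimit_sub (h0 : X ∣ G 0) (N : ℕ) :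
    X ^ N ∣ iterateLimit G - G^[N] 0 := by
  refine X_pow_dvd_iff.mpr fun n hn => ?_
  have := X_pow_dvd_iff.mp (hG.X_pow_dvd_iterate_sub h0 (Nat.succ_le_of_lt hn)) n n.lt_succ_self
  rw [map_sub, sub_eq_zero] at this
  simp [iterateLimit, this]

theorem X_dvd_iterateLimit (h0 : X ∣ G 0) : X ∣ iterateLimit G := by
  have h : X ∣ iterateLimit G - G 0 := by simpa using hG.X_pow_dvd_iterateLimit_sub h0 1
  simpa using dvd_add h h0

theorem isFixedPt_iterateLimit (h0 : X ∣ G 0) : IsFixedPt G (iterateLimit G) := by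
  refine (sub_eq_zero.mp (eq_zero_of_forall_X_pow_dvd fun N => ?_))
  have h1 := hG N (hG.X_dvd_iterateLimit h0) (hG.X_dvd_iterate h0 N)
    (hG.X_pow_dvd_iterateLimit_sub h0 N)
  have h2 := hG.X_pow_dvd_iterateLimit_sub h0 (N + 1)
  rw [iterate_succ_apply'] at h2
  exact (pow_dvd_pow X N.le_succ).trans (by simpa using dvd_sub h1 h2)

theorem eq_of_isFixedPt {x y : R⟦X⟧} (hx : X ∣ x) (hy : X ∣ y) (hfx : IsFixedPt G x)
    (hfy : IsFixedPt G y) : x = y := by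
  have key : ∀ n, X ^ n ∣ x - y := fun n => by
    induction n with
    | zero => simp
    | succ n ih => simpa [hfx.eq, hfy.eq] using hG n hx hy ih
  exact sub_eq_zero.mp (eq_zero_of_forall_X_pow_dvd key)

theorem existsUnique_isFixedPt (h0 : X ∣ G 0) : ∃! x, X ∣ x ∧ IsFixedPt G x :=
  ⟨iterateLimit G, ⟨hG.X_dvd_iterateLimit h0, hG.isFixedPt_iterateLimit h0⟩,
    fun _ hy => hG.eq_of_isFixedPt hy.1 (hG.X_dvd_iterateLimit h0) hy.2
      (hG.isFixedPt_iterateLimit h0)⟩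

theorem X_pow_dvd_of_isFixedPt {x : R⟦X⟧} {N : ℕ} (hx : X ∣ x) (hfx : IsFixedPt G x)
    (h0 : X ^ N ∣ G 0) : X ^ N ∣ x := by
  suffices ∀ c ≤ N, X ^ c ∣ x from this N le_rfl
  intro c hc
  induction c with
  | zero => simp
  | succ c ih =>
    have h := hG c hx (dvd_zero X) (by simpa using ih (by omega))
    rw [hfx.eq] at h
    simpa using dvd_add h ((pow_dvd_pow X hc).trans h0)

end IsXAdicContraction

end PowerSeries

namespace LocalParametrization

open Finset Function PowerSeries

variable {R : Type*} [CommRing R] (q : ℕ)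

/-- The exponents of `x` and `t` in `xᵢ xⱼ^q xₘ^(q²)` at `(x₀, x₁, x₂) = (x, t, 1)`. -/
def xExp (s : Fin 3 × Fin 3 × Fin 3) : ℕ :=
  ![1, 0, 0] s.1 + ![1, 0, 0] s.2.1 * q + ![1, 0, 0] s.2.2 * q ^ 2

def tExp (s : Fin 3 × Fin 3 × Fin 3) : ℕ :=
  ![0, 1, 0] s.1 + ![0, 1, 0] s.2.1 * q + ![0, 1, 0] s.2.2 * q ^ 2

theorem two_mul_le_mul_xExp_add_tExp (hq : 2 ≤ q) {s : Fin 3 × Fin 3 × Fin 3}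
    (hs : s ≠ (0, 2, 2)) (he : xExp q s ≠ 0) : 2 * q ≤ q * xExp q s + tExp q s := by
  have : q ≤ q * q := by nlinarith
  obtain ⟨i, j, m⟩ := s
  fin_cases i <;> fin_cases j <;> fin_cases m <;> simp_all [xExp, tExp] <;> nlinarith

/-- The index `(0, 2, 2)` is that of the linear term `x₀ x₂^q x₂^(q²) = x`. -/
noncomputable def fixedPointMap (a : Fin 3 → Fin 3 → Fin 3 → R) : R⟦X⟧ → R⟦X⟧ :=
  sumMonomials (univ.erase (0, 2, 2)) (fun s => -a s.1 s.2.1 s.2.2) (xExp q) (tExp q)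

variable {q}

theorem aeval_eq_sub_fixedPointMap {a : Fin 3 → Fin 3 → Fin 3 → R} (h022 : a 0 2 2 = 1)
    (x : R⟦X⟧) :
    MvPolynomial.aeval ![x, X, 1] (∑ i : Fin 3, ∑ j : Fin 3, ∑ m : Fin 3,
        MvPolynomial.C (a i j m) * MvPolynomial.X i * MvPolynomial.X j ^ q *
          MvPolynomial.X m ^ (q ^ 2)) = x - fixedPointMap q a x := by
  have hv : ∀ i : Fin 3, ![x, X, 1] i = x ^ ![1, 0, 0] i * X ^ ![0, 1, 0] i := by
    intro i; fin_cases i <;> simp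
  have hsum : MvPolynomial.aeval ![x, X, 1] (∑ i : Fin 3, ∑ j : Fin 3, ∑ m : Fin 3,
        MvPolynomial.C (a i j m) * MvPolynomial.X i * MvPolynomial.X j ^ q *
          MvPolynomial.X m ^ (q ^ 2)) =
      ∑ s : Fin 3 × Fin 3 × Fin 3, C (a s.1 s.2.1 s.2.2) * x ^ xExp q s * X ^ tExp q s := by
    simp only [Fintype.sum_prod_type, map_sum]
    refine sum_congr rfl fun i _ => sum_congr rfl fun j _ => sum_congr rfl fun m _ => ?_
    simp only [map_mul, map_pow, MvPolynomial.aeval_C, MvPolynomial.aeval_X, hv, xExp, tExp,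
      algebraMap_eq]
    ring
  rw [hsum, ← add_sum_erase _ _ (mem_univ (0, 2, 2))]
  simp [fixedPointMap, sumMonomials, xExp, tExp, h022]

theorem isXAdicContraction_fixedPointMap (hq : 2 ≤ q) (a : Fin 3 → Fin 3 → Fin 3 → R) :
    IsXAdicContraction (fixedPointMap q a) :=
  isXAdicContraction_sumMonomials fun s hs => or_iff_not_imp_left.2 fun he => by
    have h := two_mul_le_mul_xExp_add_tExp q hq (ne_of_mem_erase hs) he
    obtain h1 | h2 := (Nat.one_le_iff_ne_zero.2 he).eq_or_lt
    · rw [← h1] at h; omega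
    · omega

theorem X_pow_dvd_fixedPointMap_sub (hq : 2 ≤ q) (a : Fin 3 → Fin 3 → Fin 3 → R) {x : R⟦X⟧}
    (hx : X ^ q ∣ x) : X ^ (2 * q) ∣ fixedPointMap q a x - fixedPointMap q a 0 :=
  X_pow_dvd_sumMonomials_sub hx (dvd_zero _) (by simpa using hx) fun s hs he => by
    have := two_mul_le_mul_xExp_add_tExp q hq (ne_of_mem_erase hs) he; omega

theorem fixedPointMap_zero (hq : q ≠ 0) (a : Fin 3 → Fin 3 → Fin 3 → R) :
    fixedPointMap q a 0 = -(C (a 2 2 2) + C (a 1 2 2) * X + C (a 2 1 2) * X ^ q +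
      C (a 1 1 2) * X ^ (q + 1) + X ^ (q ^ 2) * (C (a 2 2 1) + C (a 1 2 1) * X +
        C (a 2 1 1) * X ^ q + C (a 1 1 1) * X ^ (q + 1))) := by
  rw [fixedPointMap, sumMonomials, sum_erase _ (by simp [xExp])]
  simp [Fintype.sum_prod_type, Fin.sum_univ_three, xExp, tExp, hq]
  ring

variable {a : Fin 3 → Fin 3 → Fin 3 → R}

theorem X_pow_dvd_fixedPointMap_zero_add (hq : q ≠ 0) (h222 : a 2 2 2 = 0)
    (h122 : a 1 2 2 = 0) :
    X ^ (q ^ 2) ∣ fixedPointMap q a 0 + (C (a 2 1 2) * X ^ q + C (a 1 1 2) * X ^ (q + 1)) := by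
  rw [fixedPointMap_zero hq, h222, h122]
  exact Dvd.intro (-(C (a 2 2 1) + C (a 1 2 1) * X + C (a 2 1 1) * X ^ q +
    C (a 1 1 1) * X ^ (q + 1))) (by simp only [map_zero]; ring)

theorem X_pow_dvd_fixedPointMap_zero (hq : q ≠ 0) (h222 : a 2 2 2 = 0) (h122 : a 1 2 2 = 0) :
    X ^ q ∣ fixedPointMap q a 0 := by
  have hlow : X ^ q ∣ C (a 2 1 2) * X ^ q + C (a 1 1 2) * X ^ (q + 1) :=
    Dvd.intro_left (C (a 2 1 2) + C (a 1 1 2) * X) (by ring)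
  have hqq : q ≤ q ^ 2 := Nat.le_self_pow two_ne_zero q
  simpa using dvd_sub ((pow_dvd_pow X hqq).trans
    (X_pow_dvd_fixedPointMap_zero_add hq h222 h122)) hlow

theorem X_pow_dvd_add_of_isFixedPt (hq : 2 ≤ q) (h222 : a 2 2 2 = 0) (h122 : a 1 2 2 = 0)
    {φ : R⟦X⟧} (hφX : X ∣ φ) (hφ : IsFixedPt (fixedPointMap q a) φ) :
    X ^ (q + 2) ∣ φ + (C (a 2 1 2) * X ^ q + C (a 1 1 2) * X ^ (q + 1)) := by
  have hq0 : q ≠ 0 := by omega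
  have hφq := (isXAdicContraction_fixedPointMap hq a).X_pow_dvd_of_isFixedPt hφX hφ
    (X_pow_dvd_fixedPointMap_zero hq0 h222 h122)
  have htail := X_pow_dvd_fixedPointMap_sub hq a hφq
  rw [hφ.eq] at htail
  have hqq : q + 2 ≤ q ^ 2 := by nlinarith
  rw [← sub_add_cancel φ (fixedPointMap q a 0), add_assoc]
  exact dvd_add ((pow_dvd_pow X (by omega)).trans htail)
    ((pow_dvd_pow X hqq).trans (X_pow_dvd_fixedPointMap_zero_add hq0 h222 h122))

end LocalParametrization

open MvPolynomial

theorem local_parametrization_at_tangent_point_general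
    {k : Type*} [Field k] (p ν q : ℕ) (hp : p.Prime)
    (hν : 1 ≤ ν) (hq : q = p ^ ν)
    (a : Fin 3 → Fin 3 → Fin 3 → k)
    (h222 : a 2 2 2 = 0) (h122 : a 1 2 2 = 0) (h022 : a 0 2 2 = 1)
    (F : MvPolynomial (Fin 3) k)
    (hF : F = ∑ i : Fin 3, ∑ j : Fin 3, ∑ m : Fin 3,
        C (a i j m) * X i * X j ^ q * X m ^ (q ^ 2)) :
    ∃ φ : PowerSeries k,
      (PowerSeries.coeff 0 φ = 0 ∧ aeval ![φ, PowerSeries.X, 1] F = 0) ∧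
      (∀ ψ : PowerSeries k,
          PowerSeries.coeff 0 ψ = 0 → aeval ![ψ, PowerSeries.X, 1] F = 0 → ψ = φ) ∧
      (∀ j : ℕ, 1 ≤ j → j ≤ q - 1 → PowerSeries.coeff j φ = 0) ∧
      PowerSeries.coeff q φ = -(a 2 1 2) ∧
      PowerSeries.coeff (q + 1) φ = -(a 1 1 2) := by
  have hq2 : 2 ≤ q := hq ▸ hp.two_le.trans (Nat.le_self_pow (by omega) p)
  have hroot (ψ : PowerSeries k) :
      aeval ![ψ, PowerSeries.X, 1] F = 0 ↔
        Function.IsFixedPt (LocalParametrization.fixedPointMap q a) ψ := by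
    rw [hF, LocalParametrization.aeval_eq_sub_fixedPointMap h022, sub_eq_zero, eq_comm,
      Function.IsFixedPt]
  have hX (ψ : PowerSeries k) : PowerSeries.coeff 0 ψ = 0 ↔ PowerSeries.X ∣ ψ := by
    rw [PowerSeries.X_dvd_iff, PowerSeries.coeff_zero_eq_constantCoeff_apply]
  obtain ⟨φ, ⟨hφX, hφ⟩, huniq⟩ :=
    (LocalParametrization.isXAdicContraction_fixedPointMap hq2 a).existsUnique_isFixedPt
      ((dvd_pow_self _ (by omega)).trans
        (LocalParametrization.X_pow_dvd_fixedPointMap_zero (by omega) h222 h122))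
  have hcoeff (j : ℕ) (hj : j < q + 2) : PowerSeries.coeff j φ =
      -((if j = q then a 2 1 2 else 0) + if j = q + 1 then a 1 1 2 else 0) := by
    have := PowerSeries.X_pow_dvd_iff.mp
      (LocalParametrization.X_pow_dvd_add_of_isFixedPt hq2 h222 h122 hφX hφ) j hj
    rw [map_add, map_add, PowerSeries.coeff_C_mul_X_pow, PowerSeries.coeff_C_mul_X_pow] at this
    exact eq_neg_of_add_eq_zero_left this
  refine ⟨φ, ⟨(hX φ).2 hφX, (hroot φ).2 hφ⟩, fun ψ hψX hψ => huniq ψ ⟨(hX ψ).1 hψX, (hroot ψ).1 hψ⟩,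
    fun j hj1 hj2 => ?_, ?_, ?_⟩
  · rw [hcoeff j (by omega), if_neg (by omega), if_neg (by omega)]; simp
  · simp [hcoeff q (by omega)]
  · simp [hcoeff (q + 1) (by omega)]

/-- Let `F = Σ aᵢⱼₖ xᵢ xⱼ^q xₖ^(q²)` over a field of characteristic `p` (`q` a power of
`p`) with `a₂₂₂ = 0`, `a₁₂₂ = 0` and `a₀₂₂ = 1`, so that `f(x,y) = F(x,y,1)` has the
normalized form `x + a₂₀₂x^q + a₂₁₂y^q + ⋯`. Then there is a unique formal power series
`φ(t)` with `φ(0) = 0` and `f(φ(t), t) = 0` (a local parametrization `x = φ(t)`, `y = t`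
of the curve at `P₀ = [0:0:1]`); moreover `φ(t) = -a₂₁₂ t^q - a₁₁₂ t^(q+1) + ⋯`, i.e.
the coefficients of `t^j` vanish for `1 ≤ j ≤ q-1`, the coefficient of `t^q` is `-a₂₁₂`
and that of `t^(q+1)` is `-a₁₁₂`. -/
theorem local_parametrization_at_tangent_point
    {k : Type*} [Field k] (p ν q : ℕ) (hp : p.Prime) [CharP k p]
    (hν : 1 ≤ ν) (hq : q = p ^ ν)
    (a : Fin 3 → Fin 3 → Fin 3 → k)
    (h222 : a 2 2 2 = 0) (h122 : a 1 2 2 = 0) (h022 : a 0 2 2 = 1)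
    (F : MvPolynomial (Fin 3) k)
    (hF : F = ∑ i : Fin 3, ∑ j : Fin 3, ∑ m : Fin 3,
        C (a i j m) * X i * X j ^ q * X m ^ (q ^ 2)) :
    ∃ φ : PowerSeries k,
      (PowerSeries.coeff 0 φ = 0 ∧ aeval ![φ, PowerSeries.X, 1] F = 0) ∧
      (∀ ψ : PowerSeries k,
          PowerSeries.coeff 0 ψ = 0 → aeval ![ψ, PowerSeries.X, 1] F = 0 → ψ = φ) ∧
      (∀ j : ℕ, 1 ≤ j → j ≤ q - 1 → PowerSeries.coeff j φ = 0) ∧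
      PowerSeries.coeff q φ = -(a 2 1 2) ∧
      PowerSeries.coeff (q + 1) φ = -(a 1 1 2) :=
  local_parametrization_at_tangent_point_general p ν q hp hν hq a h222 h122 h022 F hF
end

section
/- Let p be a prime, q = p^ν (ν ≥ 1) a power of p, d = q^2+q+1, and k an algebraically closed field of characteristic p. Let C_0 be the Fermat curve x_0^d + x_1^d + x_2^d = 0 and let C_0^∨ = γ_{q+1}(C_0) ⊂ P^2 be the image of C_0 under γ_{q+1} (this is the dual curve of C_0, since the reduced Gauss map of C_0 is γ_{q+1}). Then γ_d(C_0^∨) equals the Ballico–Hefez curve B = γ_{q+1}(l_0), where l_0 is the line x_0 + x_1 + x_2 = 0. Equivalently, as subsets of P^2: { [x_0^{d(q+1)} : x_1^{d(q+1)} : x_2^{d(q+1)}] : [x_0:x_1:x_2] ∈ C_0 } = { [y_0^{q+1} : y_1^{q+1} : y_2^{q+1}] : (y_0,y_1,y_2) ≠ 0, y_0+y_1+y_2 = 0 }. -/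
/-- Over an algebraically closed field `k` of characteristic `p`, with `q` a power of
`p` and `d = q²+q+1`: the image under `γ_d` of the dual curve `C₀^∨ = γ_{q+1}(C₀)` of
the Fermat curve `C₀ : x₀^d + x₁^d + x₂^d = 0` equals the Ballico–Hefez curve
`B = γ_{q+1}(l₀)`, `l₀ : x₀+x₁+x₂ = 0`. Equivalently, as subsets of `ℙ²` (stated on
nonzero coefficient vectors modulo scaling):
`{ [x₀^{d(q+1)} : x₁^{d(q+1)} : x₂^{d(q+1)}] : [x] ∈ C₀ }
  = { [y₀^{q+1} : y₁^{q+1} : y₂^{q+1}] : y ≠ 0, y₀+y₁+y₂ = 0 }`. -/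
theorem dual_of_fermat_maps_to_ballico_hefez
    {k : Type*} [Field k] [IsAlgClosed k] (p ν q d : ℕ) (hp : p.Prime) [CharP k p]
    (hν : 1 ≤ ν) (hq : q = p ^ ν) (hd : d = q ^ 2 + q + 1) :
    { z : Fin 3 → k | z ≠ 0 ∧ ∃ (x : Fin 3 → k) (lam : k), lam ≠ 0 ∧ x ≠ 0 ∧
        x 0 ^ d + x 1 ^ d + x 2 ^ d = 0 ∧ ∀ i, z i = lam * x i ^ (d * (q + 1)) } =
      { z : Fin 3 → k | z ≠ 0 ∧ ∃ (y : Fin 3 → k) (lam : k), lam ≠ 0 ∧ y ≠ 0 ∧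
        y 0 + y 1 + y 2 = 0 ∧ ∀ i, z i = lam * y i ^ (q + 1) } := by
  have hdpos : 0 < d := by omega
  ext z
  simp only [Set.mem_setOf_eq]
  constructor
  · rintro ⟨hz, x, lam, hlam, hx, hF, hzi⟩
    refine ⟨hz, fun i => x i ^ d, lam, hlam, ?_, hF, ?_⟩
    · intro h
      apply hx
      funext i
      have := congrFun h i
      simp only [Pi.zero_apply] at this ⊢
      exact pow_eq_zero_iff (by omega) |>.mp this
    · intro i; rw [hzi i, ← pow_mul]
  · rintro ⟨hz, y, lam, hlam, hy, hS, hzi⟩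
    choose x hxd using fun i => IsAlgClosed.exists_pow_nat_eq (y i) hdpos
    refine ⟨hz, x, lam, hlam, ?_, ?_, ?_⟩
    · intro h
      apply hy
      funext i
      have hi := congrFun h i
      simp only [Pi.zero_apply] at hi ⊢
      rw [← hxd i, hi, zero_pow (by omega)]
    · rw [hxd 0, hxd 1, hxd 2]; exact hS
    · intro i; rw [hzi i, pow_mul, hxd i]
end

section
/- Let p be a prime, q = p^ν (ν ≥ 1) a power of p, and k an algebraically closed field of characteristic p. Then the linear transformation of P^2 given by [u : v : w] ↦ [u : v : (−1)^{q+1}w − u − v] maps the Ballico–Hefez curve B = γ_{q+1}(l_0), the image of the line l_0 : x_0+x_1+x_2 = 0 under γ_{q+1}, bijectively onto the image of the morphism P^1 → P^2, [s : t] ↦ [s^{q+1} : t^{q+1} : s t^q + s^q t]. In particular the image of [s:t] ↦ [s^{q+1} : t^{q+1} : st^q + s^q t] is projectively isomorphic to γ_{q+1}(l_0); the key identity is that for all y_0, y_1 ∈ k, setting y_2 = −(y_0+y_1), one has (−1)^{q+1} y_2^{q+1} − y_0^{q+1} − y_1^{q+1} = y_0 y_1^q + y_0^q y_1. -/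
/-!
Since `q` is a power of the characteristic, `(y₀ + y₁) ^ q = y₀ ^ q + y₁ ^ q`, so expanding
`(y₀ + y₁) ^ (q + 1) = (y₀ + y₁) (y₀ ^ q + y₁ ^ q)` leaves only the mixed terms
`y₀ y₁ ^ q + y₀ ^ q y₁` once the two pure powers are subtracted. Parametrizing the line
`x₀ + x₁ + x₂ = 0` by `[s : t] ↦ [s : t : -(s + t)]`, the linear map sends `γ_{q+1}` of that
point to `[s ^ (q+1) : t ^ (q+1) : s t ^ q + s ^ q t]`; it is invertible because
`(-1) ^ (q+1)` is a unit.
-/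

section CommRing

variable {R : Type*} [CommRing R]

theorem add_pow_succ_sub_pow_succ_sub_pow_succ {q : ℕ} {a b : R}
    (h : (a + b) ^ q = a ^ q + b ^ q) :
    (a + b) ^ (q + 1) - a ^ (q + 1) - b ^ (q + 1) = a * b ^ q + a ^ q * b := by
  rw [pow_succ, h]
  ring

theorem neg_one_pow_mul_neg_pow (n : ℕ) (a : R) : (-1 : R) ^ n * (-a) ^ n = a ^ n := by
  rw [← mul_pow, neg_one_mul, neg_neg]

theorem neg_one_pow_mul_neg_add_pow_sub_pow_sub_pow (p ν : ℕ) [ExpChar R p] (a b : R) :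
    (-1 : R) ^ (p ^ ν + 1) * (-(a + b)) ^ (p ^ ν + 1) - a ^ (p ^ ν + 1) - b ^ (p ^ ν + 1) =
      a * b ^ p ^ ν + a ^ p ^ ν * b := by
  rw [neg_one_pow_mul_neg_pow]
  exact add_pow_succ_sub_pow_succ_sub_pow_succ (add_pow_expChar_pow a b p ν)

theorem bijective_vecCons_mul_sub_sub {c : R} (hc : IsUnit c) :
    Function.Bijective (fun z : Fin 3 → R => ![z 0, z 1, c * z 2 - z 0 - z 1]) := by
  refine Function.bijective_iff_has_inverse.2
    ⟨fun w => ![w 0, w 1, ↑hc.unit⁻¹ * (w 2 + w 0 + w 1)], fun z => funext fun i => ?_,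
      fun w => funext fun i => ?_⟩
  · fin_cases i <;> simp
    linear_combination z 2 * hc.val_inv_mul
  · fin_cases i <;> simp
    linear_combination (w 2 + w 0 + w 1) * hc.mul_val_inv

theorem eq_vecCons_of_add_add_eq_zero {y : Fin 3 → R} (hy : y 0 + y 1 + y 2 = 0) :
    y = ![y 0, y 1, -(y 0 + y 1)] := by
  funext i
  fin_cases i <;> simp [eq_neg_of_add_eq_zero_right hy]

theorem vecCons_neg_add_eq_zero_iff (s t : R) : ![s, t, -(s + t)] = 0 ↔ s = 0 ∧ t = 0 := by
  constructor
  · intro h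
    exact ⟨congrFun h 0, congrFun h 1⟩
  · rintro ⟨rfl, rfl⟩
    funext i
    fin_cases i <;> simp

theorem ballicoHefez_image_eq (p ν : ℕ) [ExpChar R p] :
    { z : Fin 3 → R | z ≠ 0 ∧ ∃ (y : Fin 3 → R) (lam : R), lam ≠ 0 ∧ y ≠ 0 ∧
        y 0 + y 1 + y 2 = 0 ∧ z 0 = lam * y 0 ^ (p ^ ν + 1) ∧ z 1 = lam * y 1 ^ (p ^ ν + 1) ∧
        z 2 = lam * ((-1 : R) ^ (p ^ ν + 1) * y 2 ^ (p ^ ν + 1) - y 0 ^ (p ^ ν + 1) -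
          y 1 ^ (p ^ ν + 1)) } =
      { z : Fin 3 → R | z ≠ 0 ∧ ∃ s t lam : R, lam ≠ 0 ∧ ¬ (s = 0 ∧ t = 0) ∧
        z 0 = lam * s ^ (p ^ ν + 1) ∧ z 1 = lam * t ^ (p ^ ν + 1) ∧
        z 2 = lam * (s * t ^ p ^ ν + s ^ p ^ ν * t) } := by
  ext z
  refine and_congr_right fun _ => ⟨?_, ?_⟩
  · rintro ⟨y, lam, hlam, hy, hsum, h0, h1, h2⟩
    rw [eq_vecCons_of_add_add_eq_zero hsum, Ne, vecCons_neg_add_eq_zero_iff] at hy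
    refine ⟨y 0, y 1, lam, hlam, hy, h0, h1, ?_⟩
    rw [h2, eq_neg_of_add_eq_zero_right hsum, neg_one_pow_mul_neg_add_pow_sub_pow_sub_pow]
  · rintro ⟨s, t, lam, hlam, hst, h0, h1, h2⟩
    refine ⟨![s, t, -(s + t)], lam, hlam, (vecCons_neg_add_eq_zero_iff s t).not.2 hst,
      by simp, h0, h1, ?_⟩
    rw [h2, ← neg_one_pow_mul_neg_add_pow_sub_pow_sub_pow]
    rfl

end CommRing

theorem ballico_hefez_projectively_isomorphic_to_standard_form_general
    {k : Type*} [Field k] (p ν q : ℕ) (hp : p.Prime) [CharP k p]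
    (hq : q = p ^ ν) :
    (∀ y₀ y₁ : k,
        (-1 : k) ^ (q + 1) * (-(y₀ + y₁)) ^ (q + 1) - y₀ ^ (q + 1) - y₁ ^ (q + 1) =
          y₀ * y₁ ^ q + y₀ ^ q * y₁) ∧
    Function.Bijective
      (fun z : Fin 3 → k => ![z 0, z 1, (-1 : k) ^ (q + 1) * z 2 - z 0 - z 1]) ∧
    { z : Fin 3 → k | z ≠ 0 ∧ ∃ (y : Fin 3 → k) (lam : k), lam ≠ 0 ∧ y ≠ 0 ∧
        y 0 + y 1 + y 2 = 0 ∧ z 0 = lam * y 0 ^ (q + 1) ∧ z 1 = lam * y 1 ^ (q + 1) ∧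
        z 2 = lam * ((-1 : k) ^ (q + 1) * y 2 ^ (q + 1) - y 0 ^ (q + 1) - y 1 ^ (q + 1)) } =
      { z : Fin 3 → k | z ≠ 0 ∧ ∃ s t lam : k, lam ≠ 0 ∧ ¬ (s = 0 ∧ t = 0) ∧
        z 0 = lam * s ^ (q + 1) ∧ z 1 = lam * t ^ (q + 1) ∧
        z 2 = lam * (s * t ^ q + s ^ q * t) } := by
  subst hq
  have : Fact p.Prime := ⟨hp⟩
  exact ⟨neg_one_pow_mul_neg_add_pow_sub_pow_sub_pow p ν,
    bijective_vecCons_mul_sub_sub (isUnit_neg_one.pow _), ballicoHefez_image_eq p ν⟩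

/-- Over an algebraically closed field `k` of characteristic `p`, with `q` a power of
`p`: the linear transformation `[u:v:w] ↦ [u : v : (−1)^{q+1}w − u − v]` of `ℙ²` is
bijective and maps the Ballico–Hefez curve `B = γ_{q+1}(l₀)` (the image of the line
`l₀ : x₀+x₁+x₂ = 0` under `γ_{q+1}`) onto the image of `ℙ¹ → ℙ²`,
`[s:t] ↦ [s^{q+1} : t^{q+1} : st^q + s^q t]`; the key identity is that for `y₂ = −(y₀+y₁)`
one has `(−1)^{q+1} y₂^{q+1} − y₀^{q+1} − y₁^{q+1} = y₀ y₁^q + y₀^q y₁`.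
(The image sets are stated on nonzero coefficient vectors modulo scaling.) -/
theorem ballico_hefez_projectively_isomorphic_to_standard_form
    {k : Type*} [Field k] [IsAlgClosed k] (p ν q : ℕ) (hp : p.Prime) [CharP k p]
    (hν : 1 ≤ ν) (hq : q = p ^ ν) :
    (∀ y₀ y₁ : k,
        (-1 : k) ^ (q + 1) * (-(y₀ + y₁)) ^ (q + 1) - y₀ ^ (q + 1) - y₁ ^ (q + 1) =
          y₀ * y₁ ^ q + y₀ ^ q * y₁) ∧
    Function.Bijective
      (fun z : Fin 3 → k => ![z 0, z 1, (-1 : k) ^ (q + 1) * z 2 - z 0 - z 1]) ∧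
    { z : Fin 3 → k | z ≠ 0 ∧ ∃ (y : Fin 3 → k) (lam : k), lam ≠ 0 ∧ y ≠ 0 ∧
        y 0 + y 1 + y 2 = 0 ∧ z 0 = lam * y 0 ^ (q + 1) ∧ z 1 = lam * y 1 ^ (q + 1) ∧
        z 2 = lam * ((-1 : k) ^ (q + 1) * y 2 ^ (q + 1) - y 0 ^ (q + 1) - y 1 ^ (q + 1)) } =
      { z : Fin 3 → k | z ≠ 0 ∧ ∃ s t lam : k, lam ≠ 0 ∧ ¬ (s = 0 ∧ t = 0) ∧
        z 0 = lam * s ^ (q + 1) ∧ z 1 = lam * t ^ (q + 1) ∧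
        z 2 = lam * (s * t ^ q + s ^ q * t) } :=
  ballico_hefez_projectively_isomorphic_to_standard_form_general p ν q hp hq
end

section
/- Let p be an odd prime, q = p^ν (ν ≥ 1) a power of p, d = q^2+q+1, and k an algebraically closed field of characteristic p. Let h ∈ k[x_0,x_1,x_2] be the polynomial h = x_0^{q+1} + x_1^{q+1} + x_2^{q+1} − x_0^q x_1 − x_0^q x_2 − x_0 x_1^q − x_1^q x_2 − x_0 x_2^q − x_1 x_2^q + (x_0^2 + x_1^2 + x_2^2 − 2x_0x_1 − 2x_1x_2 − 2x_2x_0)^{(q+1)/2}. Then the set of points [x_1 : x_2] of the projective line P^1 over k satisfying h(0, x_1^d, x_2^d) = 0 has exactly d = q^2+q+1 elements. (These are the points of the dual curve of the Fermat curve of degree d lying on the line x_0 = 0.) -/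
/-!
On the line `x₀ = 0` the Frobenius identity `(y - z)^q = y^q - z^q` collapses `h(0, y, z)`
to `2 (y - z)^(q+1)`, so the points in question are the `[x₁ : x₂]` with `x₁^d = x₂^d`.
In the chart `t ↦ [t : 1]` of `ℙ¹` (the point `[1 : 0]` is not among them) these are the
`d`-th roots of unity, and there are `d` of them because `d ≡ 1 mod p`.
-/

open MvPolynomial

section BallicoHefez

variable (R : Type*) [CommRing R]

noncomputable def ballicoHefez (q : ℕ) : MvPolynomial (Fin 3) R :=
  X 0 ^ (q + 1) + X 1 ^ (q + 1) + X 2 ^ (q + 1)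
    - X 0 ^ q * X 1 - X 0 ^ q * X 2 - X 0 * X 1 ^ q
    - X 1 ^ q * X 2 - X 0 * X 2 ^ q - X 1 * X 2 ^ q
    + (X 0 ^ 2 + X 1 ^ 2 + X 2 ^ 2
        - C 2 * X 0 * X 1 - C 2 * X 1 * X 2 - C 2 * X 2 * X 0) ^ ((q + 1) / 2)

variable {R} {p : ℕ} [ExpChar R p] {ν : ℕ}

theorem eval_vecCons_zero_ballicoHefez (hq : Odd (p ^ ν)) (y z : R) :
    eval ![0, y, z] (ballicoHefez R (p ^ ν)) = 2 * (y - z) ^ (p ^ ν + 1) := by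
  obtain ⟨m, hm⟩ := hq
  have hhalf : (p ^ ν + 1) / 2 = m + 1 := by omega
  have hfrob := sub_pow_expChar_pow y z (p := p) (n := ν)
  simp only [ballicoHefez, hhalf, map_add, map_sub, map_mul, map_pow, eval_X, eval_C,
    Matrix.cons_val_zero, Matrix.cons_val_one, Matrix.cons_val_two, Matrix.head_cons,
    Matrix.tail_cons, zero_pow (Nat.succ_ne_zero _), zero_pow (show p ^ ν ≠ 0 by omega)]
  calc _ = (y ^ p ^ ν - z ^ p ^ ν) * (y - z) + ((y - z) ^ 2) ^ (m + 1) := by ring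
    _ = _ := by rw [← hfrob, ← pow_mul, hm]; ring

theorem eval_vecCons_zero_ballicoHefez_eq_zero_iff [IsDomain R] (h2 : (2 : R) ≠ 0)
    (hq : Odd (p ^ ν)) (y z : R) :
    eval ![0, y, z] (ballicoHefez R (p ^ ν)) = 0 ↔ y = z := by
  rw [eval_vecCons_zero_ballicoHefez hq, mul_eq_zero, or_iff_right h2,
    pow_eq_zero_iff (Nat.succ_ne_zero _), sub_eq_zero]

end BallicoHefez

open scoped LinearAlgebra.Projectivization

namespace Projectivization

variable {K : Type*} [Field K]

theorem rep_zero_pow_eq_rep_one_pow_mk_iff {v : Fin 2 → K} (hv : v ≠ 0) (d : ℕ) :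
    (mk K v hv).rep 0 ^ d = (mk K v hv).rep 1 ^ d ↔ v 0 ^ d = v 1 ^ d := by
  obtain ⟨u, hu⟩ := exists_smul_eq_mk_rep K v hv
  simp only [← hu, Pi.smul_apply, Units.smul_def, smul_eq_mul, mul_pow]
  exact mul_right_inj' (pow_ne_zero d u.ne_zero)

theorem ncard_setOf_rep_zero_pow_eq_rep_one_pow {d : ℕ} (hd : d ≠ 0) :
    {P : ℙ K (Fin 2 → K) | P.rep 0 ^ d = P.rep 1 ^ d}.ncard =
      (Polynomial.nthRootsFinset d (1 : K)).card := by
  classical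
  set e := OnePoint.equivProjectivization K
  have hpre : e ⁻¹' {P | P.rep 0 ^ d = P.rep 1 ^ d} =
      (↑) '' (Polynomial.nthRootsFinset d (1 : K) : Set K) := by
    ext x
    cases x with
    | infty => simp [e, rep_zero_pow_eq_rep_one_pow_mk_iff, hd]
    | coe a =>
      simp [e, rep_zero_pow_eq_rep_one_pow_mk_iff,
        Polynomial.mem_nthRootsFinset (Nat.pos_of_ne_zero hd)]
  rw [← Set.ncard_preimage_of_injective_subset_range e.injective (by simp), hpre,
    Set.ncard_image_of_injective _ OnePoint.coe_injective, Set.ncard_coe_finset]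

end Projectivization

/-- Let `p` be an odd prime, `q` a power of `p`, `d = q²+q+1`, `k` algebraically closed
of characteristic `p`, and `h` the defining polynomial of the Ballico–Hefez curve. The
set of points `[x₁ : x₂]` of `ℙ¹` with `h(0, x₁^d, x₂^d) = 0` — the points of the dual
curve of the Fermat curve of degree `d` on the line `x₀ = 0` — has exactly
`d = q²+q+1` elements. -/
theorem dual_fermat_points_on_line_x0_card
    {k : Type*} [Field k] [IsAlgClosed k] (p ν q d : ℕ) (hp : p.Prime) (hp2 : p ≠ 2)
    [CharP k p] (hν : 1 ≤ ν) (hq : q = p ^ ν) (hd : d = q ^ 2 + q + 1)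
    (h : MvPolynomial (Fin 3) k)
    (hh : h = X 0 ^ (q + 1) + X 1 ^ (q + 1) + X 2 ^ (q + 1)
        - X 0 ^ q * X 1 - X 0 ^ q * X 2 - X 0 * X 1 ^ q
        - X 1 ^ q * X 2 - X 0 * X 2 ^ q - X 1 * X 2 ^ q
        + (X 0 ^ 2 + X 1 ^ 2 + X 2 ^ 2
            - C 2 * X 0 * X 1 - C 2 * X 1 * X 2 - C 2 * X 2 * X 0) ^ ((q + 1) / 2)) :
    { P : Projectivization k (Fin 2 → k) |
        eval ![0, (P.rep 0) ^ d, (P.rep 1) ^ d] h = 0 }.ncard = d := by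
  have : Fact p.Prime := ⟨hp⟩
  have hh : h = ballicoHefez k (p ^ ν) := hq ▸ hh
  have hodd : Odd (p ^ ν) := (hp.odd_of_ne_two hp2).pow
  have h2 : (2 : k) ≠ 0 := Ring.two_ne_zero (by rwa [ringChar.eq k p])
  simp only [hh, eval_vecCons_zero_ballicoHefez_eq_zero_iff h2 hodd]
  rw [Projectivization.ncard_setOf_rep_zero_pow_eq_rep_one_pow (by omega)]
  have : NeZero (d : k) := ⟨by
    have hq0 : (q : k) = 0 := by
      rw [hq, Nat.cast_pow, CharP.cast_eq_zero k p, zero_pow (by omega)]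
    simp [hd, hq0]⟩
  obtain ⟨ζ, hζ⟩ := HasEnoughRootsOfUnity.exists_primitiveRoot k d
  exact hζ.card_nthRootsFinset
end
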